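/- There exist c > 0 and K ∈ ℕ (depending on β, m, δ) such that the following holds. Let τ₁, τ₂, τ₃ ∈ ℝ and k₁, k₂, k₃ ∈ ℤ \ {0} satisfy τ₁ + τ₂ + τ₃ = 0, k₁ + k₂ + k₃ = 0 and max{|k₁|, |k₂|, |k₃|} ≥ K. Set M_j := ⟨(τ_j - λ_{k_j})/⟨k_j⟩^δ⟩, N_max := max_j ⟨k_j⟩, N_min := min_j ⟨k_j⟩. Suppose the maximum of (M₁, M₂, M₃) is attained at an index j₀ at which the minimum of (⟨k₁⟩, ⟨k₂⟩, ⟨k₃⟩) is also attained, and that M_j ≤ M_{j₀}·(N_min/N_max)^δ for both indices j ≠ j₀. Then M_{j₀} ≥ c · N_max^{2m} · N_min^{1-δ}. -/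

import Mathlib

/-- The Japanese bracket `⟨x⟩ = (1 + |x|²)^{1/2}`. -/
noncomputable def jbr (x : ℝ) : ℝ := Real.sqrt (1 + x ^ 2)

/-- The modulation weight `M = ⟨(τ - λ_k)/⟨k⟩^δ⟩`. -/
noncomputable def modw (lam : ℤ → ℝ) (δ : ℝ) (k : ℤ) (τ : ℝ) : ℝ :=
  jbr ((τ - lam k) / jbr (k : ℝ) ^ δ)

/-! Because `k₁ + k₂ + k₃ = 0`, the linear part of `λ` cancels in the resonance
`λ_{k₁} + λ_{k₂} + λ_{k₃}`, and two of the `k_j` share a sign; with `y = min |k_j|` and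
`x + y = max |k_j|`, the odd power `k |k|^p` then sums to `∓((x+y)^{1+p} - x^{1+p} - y^{1+p})`.
The tangent-line inequality for `t ↦ t^{1+p}` traps this defect between `p x^p y` and
`(1+p) (x+y)^p y`, so for large frequencies the `β`-term of exponent `2m > 2r` wins and the
resonance is `≳ N_max^{2m} N_min`. On the other hand the resonance is `-∑ (τ_j - λ_{k_j})`, and the
hypotheses on the modulations bound each term by `M_{j₀} N_min^δ`. -/

open Real Filter

lemma jbr_pos (x : ℝ) : 0 < jbr x := sqrt_pos.mpr (by positivity)

lemma abs_le_jbr (x : ℝ) : |x| ≤ jbr x := by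
  rw [← sqrt_sq_eq_abs]; exact sqrt_le_sqrt (by linarith)

lemma jbr_le_two_mul_abs {x : ℝ} (hx : 1 ≤ |x|) : jbr x ≤ 2 * |x| := by
  rw [jbr, sqrt_le_left (by positivity), mul_pow, sq_abs]
  nlinarith [sq_abs x]

lemma max_jbr_le_two_mul_max_abs {a b c : ℝ} (ha : 1 ≤ |a|) (hb : 1 ≤ |b|) (hc : 1 ≤ |c|) :
    max (jbr a) (max (jbr b) (jbr c)) ≤ 2 * max |a| (max |b| |c|) := by
  rw [mul_max_of_nonneg _ _ zero_le_two, mul_max_of_nonneg _ _ zero_le_two]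
  exact max_le_max (jbr_le_two_mul_abs ha)
    (max_le_max (jbr_le_two_mul_abs hb) (jbr_le_two_mul_abs hc))

lemma min_jbr_le_two_mul_min_abs {a b c : ℝ} (ha : 1 ≤ |a|) (hb : 1 ≤ |b|) (hc : 1 ≤ |c|) :
    min (jbr a) (min (jbr b) (jbr c)) ≤ 2 * min |a| (min |b| |c|) := by
  rw [mul_min_of_nonneg _ _ zero_le_two, mul_min_of_nonneg _ _ zero_le_two]
  exact min_le_min (jbr_le_two_mul_abs ha)
    (min_le_min (jbr_le_two_mul_abs hb) (jbr_le_two_mul_abs hc))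

lemma modw_nonneg (lam : ℤ → ℝ) (δ : ℝ) (k : ℤ) (τ : ℝ) : 0 ≤ modw lam δ k τ :=
  sqrt_nonneg _

lemma abs_sub_le_modw_mul_rpow (lam : ℤ → ℝ) (δ : ℝ) (k : ℤ) (τ : ℝ) :
    |τ - lam k| ≤ modw lam δ k τ * jbr k ^ δ := by
  have hpos : 0 < jbr k ^ δ := rpow_pos_of_pos (jbr_pos _) δ
  rw [← div_le_iff₀ hpos, ← abs_of_pos hpos, ← abs_div]
  exact abs_le_jbr _

lemma abs_sum_lam_le_card_mul {ι : Type*} [Fintype ι] (lam : ℤ → ℝ) {δ : ℝ} (hδ : 0 ≤ δ)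
    (k : ι → ℤ) (τ : ι → ℝ) (hτ : ∑ j, τ j = 0) (j₀ : ι) {n N : ℝ} (hn : jbr (k j₀) = n)
    (hN : ∀ j, jbr (k j) ≤ N)
    (hsmall : ∀ j, j ≠ j₀ → modw lam δ (k j) (τ j) ≤ modw lam δ (k j₀) (τ j₀) * (n / N) ^ δ) :
    |∑ j, lam (k j)| ≤ Fintype.card ι * (modw lam δ (k j₀) (τ j₀) * n ^ δ) := by
  have hn_pos : 0 < n := hn ▸ jbr_pos _
  have hN_pos : 0 < N := (jbr_pos _).trans_le (hN j₀)
  have hterm : ∀ j, |τ j - lam (k j)| ≤ modw lam δ (k j₀) (τ j₀) * n ^ δ := by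
    intro j
    by_cases hj : j = j₀
    · subst hj; rw [← hn]; exact abs_sub_le_modw_mul_rpow lam δ _ _
    calc |τ j - lam (k j)| ≤ modw lam δ (k j) (τ j) * jbr (k j) ^ δ :=
          abs_sub_le_modw_mul_rpow lam δ _ _
      _ ≤ modw lam δ (k j₀) (τ j₀) * (n / N) ^ δ * N ^ δ :=
          mul_le_mul (hsmall j hj) (rpow_le_rpow (jbr_pos _).le (hN j) hδ)
            (rpow_nonneg (jbr_pos _).le δ) ((modw_nonneg ..).trans (hsmall j hj))
      _ = modw lam δ (k j₀) (τ j₀) * n ^ δ := by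
          rw [mul_assoc, ← mul_rpow (by positivity) hN_pos.le, div_mul_cancel₀ _ hN_pos.ne']
  have hsum : ∑ j, lam (k j) = -∑ j, (τ j - lam (k j)) := by
    rw [Finset.sum_sub_distrib, hτ]; ring
  rw [hsum, abs_neg]
  calc |∑ j, (τ j - lam (k j))| ≤ ∑ j, |τ j - lam (k j)| := Finset.abs_sum_le_sum_abs _ _
    _ ≤ ∑ _j : ι, modw lam δ (k j₀) (τ j₀) * n ^ δ := Finset.sum_le_sum fun j _ => hterm j
    _ = _ := by rw [Finset.sum_const, Finset.card_univ, nsmul_eq_mul]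

lemma rpow_one_add_add_mul_le {p a b : ℝ} (hp : 0 ≤ p) (ha : 0 < a) (hab : 0 ≤ a + b) :
    a ^ (1 + p) + (1 + p) * a ^ p * b ≤ (a + b) ^ (1 + p) := by
  have hb : -1 ≤ b / a := by rw [le_div_iff₀ ha]; linarith
  have bernoulli := one_add_mul_self_le_rpow_one_add hb (by linarith : 1 ≤ 1 + p)
  have hsplit : a + b = a * (1 + b / a) := by field_simp
  have hpow : a ^ (1 + p) = a ^ p * a := by rw [rpow_add ha, rpow_one, mul_comm]
  rw [hsplit, mul_rpow ha.le (by linarith)]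
  calc a ^ (1 + p) + (1 + p) * a ^ p * b = a ^ (1 + p) * (1 + (1 + p) * (b / a)) := by
        rw [hpow]; field_simp
    _ ≤ a ^ (1 + p) * (1 + b / a) ^ (1 + p) := by gcongr

noncomputable def rpowDefect (p x y : ℝ) : ℝ := (x + y) ^ (1 + p) - x ^ (1 + p) - y ^ (1 + p)

lemma rpowDefect_comm (p x y : ℝ) : rpowDefect p x y = rpowDefect p y x := by
  unfold rpowDefect; rw [add_comm x y]; ring

lemma mul_rpow_mul_le_rpowDefect {p x y : ℝ} (hp : 0 ≤ p) (hy : 0 < y) (hyx : y ≤ x) :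
    p * x ^ p * y ≤ rpowDefect p x y := by
  have htangent := rpow_one_add_add_mul_le hp (hy.trans_le hyx) (b := y) (by linarith)
  have hy_pow : y ^ (1 + p) ≤ x ^ p * y := by
    rw [rpow_add hy, rpow_one, mul_comm]
    gcongr
  unfold rpowDefect
  linarith

lemma rpowDefect_le {p x y : ℝ} (hp : 0 ≤ p) (hx : 0 ≤ x) (hy : 0 < y) :
    rpowDefect p x y ≤ (1 + p) * (x + y) ^ p * y := by
  have htangent := rpow_one_add_add_mul_le hp (by linarith : 0 < x + y) (b := -y) (by linarith)
  have hy_pow : 0 ≤ y ^ (1 + p) := rpow_nonneg hy.le _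
  rw [add_neg_cancel_right] at htangent
  unfold rpowDefect
  linarith

lemma exists_mul_rpow_mul_le_sub_rpowDefect {p q β : ℝ} (α : ℝ) (hq : 0 ≤ q) (hqp : q < p)
    (hβ : 0 < β) :
    ∃ C > 0, ∃ K : ℝ, ∀ x y : ℝ, 0 < y → y ≤ x → K ≤ x + y →
      C * (x + y) ^ p * y ≤ β * rpowDefect p x y - α * rpowDefect q x y := by
  have hp : 0 < p := hq.trans_lt hqp
  set C := β * p / 2 ^ p / 2 with hC
  have hCpos : 0 < C := by positivity
  obtain ⟨K, hK⟩ := eventually_atTop.mp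
    ((tendsto_rpow_atTop (sub_pos.mpr hqp)).eventually_ge_atTop (|α| * (1 + q) / C))
  refine ⟨C, hCpos, K, fun x y hy hyx hxy => ?_⟩
  set S := x + y
  have hS : 0 < S := by linarith
  have hSq : |α| * (1 + q) ≤ C * S ^ (p - q) := by
    rw [← div_le_iff₀' hCpos]; exact hK S hxy
  have hSp : S ^ p = S ^ (p - q) * S ^ q := by rw [← rpow_add hS, sub_add_cancel]
  have hx : S / 2 ≤ x := by linarith
  have hβ_part : 2 * C * S ^ p * y ≤ β * rpowDefect p x y := by
    calc 2 * C * S ^ p * y = β * (p * (S / 2) ^ p * y) := by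
          rw [hC, div_rpow hS.le zero_le_two]; field_simp
      _ ≤ β * (p * x ^ p * y) := by gcongr
      _ ≤ β * rpowDefect p x y := by gcongr; exact mul_rpow_mul_le_rpowDefect hp.le hy hyx
  have hα_part : α * rpowDefect q x y ≤ C * S ^ p * y := by
    calc α * rpowDefect q x y ≤ |α| * rpowDefect q x y := by
          gcongr
          · exact (mul_nonneg (mul_nonneg hq (rpow_nonneg (by linarith) _)) hy.le).trans
              (mul_rpow_mul_le_rpowDefect hq hy hyx)
          · exact le_abs_self α
      _ ≤ |α| * ((1 + q) * S ^ q * y) := by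
          gcongr; exact rpowDefect_le hq (by linarith) hy
      _ = |α| * (1 + q) * (S ^ q * y) := by ring
      _ ≤ C * S ^ (p - q) * (S ^ q * y) := by gcongr
      _ = C * S ^ p * y := by rw [hSp]; ring
  linarith

noncomputable def oddRpow (p x : ℝ) : ℝ := x * |x| ^ p

lemma oddRpow_neg (p x : ℝ) : oddRpow p (-x) = -oddRpow p x := by
  unfold oddRpow; rw [abs_neg]; ring

lemma oddRpow_of_pos {p x : ℝ} (hx : 0 < x) : oddRpow p x = x ^ (1 + p) := by
  rw [oddRpow, abs_of_pos hx, rpow_add hx, rpow_one]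

lemma sum_oddRpow_of_pos {p a b c : ℝ} (ha : 0 < a) (hb : 0 < b) (habc : a + b + c = 0) :
    oddRpow p a + oddRpow p b + oddRpow p c = -rpowDefect p a b := by
  rw [show c = -(a + b) by linarith, oddRpow_neg, oddRpow_of_pos ha, oddRpow_of_pos hb,
    oddRpow_of_pos (add_pos ha hb), rpowDefect]
  ring

theorem exists_mul_rpow_max_mul_min_le_abs_sum_oddRpow {p q β : ℝ} (α : ℝ) (hq : 0 ≤ q)
    (hqp : q < p) (hβ : 0 < β) :
    ∃ C > 0, ∃ K : ℝ, ∀ a b c : ℝ, a ≠ 0 → b ≠ 0 → c ≠ 0 → a + b + c = 0 →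
      K ≤ max |a| (max |b| |c|) →
      C * max |a| (max |b| |c|) ^ p * min |a| (min |b| |c|) ≤
        |β * (oddRpow p a + oddRpow p b + oddRpow p c) -
          α * (oddRpow q a + oddRpow q b + oddRpow q c)| := by
  obtain ⟨C, hC, K, hK⟩ := exists_mul_rpow_mul_le_sub_rpowDefect α hq hqp hβ
  refine ⟨C, hC, K, fun a b c ha hb hc habc hKabc => ?_⟩
  wlog hab : 0 < a * b generalizing a b c with H
  · have hc2 : 0 < c ^ 2 := by positivity
    have hab' : a * b < 0 := lt_of_le_of_ne (not_lt.mp hab) (mul_ne_zero ha hb)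
    rcases lt_or_ge 0 (a * c) with hac | hac
    · have := H a c b ha hc hb (by linarith) (by simpa only [max_comm |b|] using hKabc) hac
      simpa only [max_comm |c|, min_comm |c|, add_right_comm _ (oddRpow _ c)] using this
    rcases lt_or_ge 0 (b * c) with hbc | hbc
    · rw [max_left_comm |a|, max_comm |a| |c|] at hKabc ⊢
      rw [min_left_comm |a|, min_comm |a| |c|]
      convert H b c a hb hc ha (by linarith) hKabc hbc using 3 <;> ring
    -- `(a c) (b c) = (a b) c² < 0`
    · nlinarith [mul_nonneg_of_nonpos_of_nonpos hac hbc]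
  wlog ha_pos : 0 < a generalizing a b c with H
  · have ha_neg : a < 0 := lt_of_le_of_ne (not_lt.mp ha_pos) ha
    have := H (-a) (-b) (-c) (neg_ne_zero.mpr ha) (neg_ne_zero.mpr hb) (neg_ne_zero.mpr hc)
      (by linarith) (by simpa only [abs_neg] using hKabc) (by rwa [neg_mul_neg])
      (neg_pos.mpr ha_neg)
    simp only [abs_neg, oddRpow_neg] at this
    convert this using 1
    rw [← abs_neg]; ring_nf
  have hb_pos : 0 < b := (pos_iff_pos_of_mul_pos hab).mp ha_pos
  have hc_abs : |c| = a + b := by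
    rw [show c = -(a + b) by linarith, abs_neg, abs_of_pos (by linarith)]
  have hmax : max |a| (max |b| |c|) = a + b := by
    rw [hc_abs, abs_of_pos ha_pos, abs_of_pos hb_pos, max_eq_right (by linarith : b ≤ a + b),
      max_eq_right (by linarith : a ≤ a + b)]
  have hmin : min |a| (min |b| |c|) = min a b := by
    rw [hc_abs, abs_of_pos ha_pos, abs_of_pos hb_pos, min_eq_left (by linarith : b ≤ a + b)]
  rw [hmax, hmin, sum_oddRpow_of_pos ha_pos hb_pos habc, sum_oddRpow_of_pos ha_pos hb_pos habc,
    ← abs_neg]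
  refine le_trans ?_ (le_abs_self _)
  rcases le_total b a with hba | hab_le
  · rw [min_eq_right hba]
    linarith [hK a b hb_pos hba (by rwa [hmax] at hKabc)]
  · rw [min_eq_left hab_le, rpowDefect_comm p, rpowDefect_comm q, add_comm a b]
    linarith [hK b a ha_pos hab_le (by rwa [hmax, add_comm] at hKabc)]

lemma mul_rpow_mul_rpow_one_sub_le {p δ C M S s N n : ℝ} (hp : 0 ≤ p) (hC : 0 ≤ C) (hN : 0 ≤ N)
    (hn : 0 < n) (hNS : N ≤ 2 * S) (hns : n ≤ 2 * s) (h : C * S ^ p * s ≤ 3 * (M * n ^ δ)) :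
    C / (3 * 2 ^ p * 2) * N ^ p * n ^ (1 - δ) ≤ M := by
  have hnδ : 0 < n ^ δ := rpow_pos_of_pos hn δ
  rw [← mul_le_mul_iff_of_pos_right hnδ]
  calc C / (3 * 2 ^ p * 2) * N ^ p * n ^ (1 - δ) * n ^ δ = C / (3 * 2 ^ p * 2) * N ^ p * n := by
        rw [mul_assoc _ (n ^ (1 - δ)), ← rpow_add hn, sub_add_cancel, rpow_one]
    _ ≤ C / (3 * 2 ^ p * 2) * (2 * S) ^ p * (2 * s) := by
        gcongr
        exact mul_nonneg (by positivity) (rpow_nonneg (hN.trans hNS) p)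
    _ = C * S ^ p * s / 3 := by
        rw [mul_rpow zero_le_two (by linarith)]; field_simp
    _ ≤ M * n ^ δ := by linarith

lemma le_max_of_fin_three (f : Fin 3 → ℝ) (j : Fin 3) : f j ≤ max (f 0) (max (f 1) (f 2)) := by
  fin_cases j <;> simp

lemma min_le_of_fin_three (f : Fin 3 → ℝ) (j : Fin 3) : min (f 0) (min (f 1) (f 2)) ≤ f j := by
  fin_cases j <;> simp

theorem modulation_max_at_min_frequency_case1_general
    (α β μ m r δ : ℝ) (hβ : 0 < β) (hr : 0 < r) (hrm : r < m) (hδ : 0 < δ)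
    (lam : ℤ → ℝ)
    (hlam : ∀ k : ℤ, lam k =
      -β * (k : ℝ) * |(k : ℝ)| ^ (2 * m) + α * (k : ℝ) * |(k : ℝ)| ^ (2 * r) - 2 * μ * (k : ℝ)) :
    ∃ c > 0, ∃ K : ℕ, ∀ (k : Fin 3 → ℤ) (τ : Fin 3 → ℝ),
      (∀ j, k j ≠ 0) → (∑ j, τ j) = 0 → (∑ j, k j) = 0 →
      (K : ℤ) ≤ max |k 0| (max |k 1| |k 2|) →
      ∀ j₀ : Fin 3,
        (∀ j, modw lam δ (k j) (τ j) ≤ modw lam δ (k j₀) (τ j₀)) →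
        (∀ j, jbr ((k j₀ : ℤ) : ℝ) ≤ jbr ((k j : ℤ) : ℝ)) →
        (∀ j, j ≠ j₀ → modw lam δ (k j) (τ j) ≤
          modw lam δ (k j₀) (τ j₀) *
            (min (jbr ((k 0 : ℤ) : ℝ)) (min (jbr ((k 1 : ℤ) : ℝ)) (jbr ((k 2 : ℤ) : ℝ))) /
              max (jbr ((k 0 : ℤ) : ℝ)) (max (jbr ((k 1 : ℤ) : ℝ)) (jbr ((k 2 : ℤ) : ℝ)))) ^ δ) →
        c * max (jbr ((k 0 : ℤ) : ℝ)) (max (jbr ((k 1 : ℤ) : ℝ)) (jbr ((k 2 : ℤ) : ℝ))) ^ (2 * m)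
            * min (jbr ((k 0 : ℤ) : ℝ)) (min (jbr ((k 1 : ℤ) : ℝ)) (jbr ((k 2 : ℤ) : ℝ))) ^ (1 - δ)
          ≤ modw lam δ (k j₀) (τ j₀) := by
  obtain ⟨C, hC, K, hK⟩ := exists_mul_rpow_max_mul_min_le_abs_sum_oddRpow α
    (by positivity : (0 : ℝ) ≤ 2 * r) (by linarith : 2 * r < 2 * m) hβ
  refine ⟨C / (3 * 2 ^ (2 * m) * 2), by positivity, ⌈K⌉₊,
    fun k τ hk hτ hksum hKk j₀ _ hmin hsmall => ?_⟩
  have hk_sum : (k 0 : ℝ) + k 1 + k 2 = 0 := by exact_mod_cast Fin.sum_univ_three k ▸ hksum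
  have hk_abs (j : Fin 3) : 1 ≤ |(k j : ℝ)| := by
    rw [← Int.cast_abs]; exact_mod_cast Int.one_le_abs (hk j)
  have hresonance := hK (k 0) (k 1) (k 2) (by exact_mod_cast hk 0) (by exact_mod_cast hk 1)
    (by exact_mod_cast hk 2) hk_sum ((Nat.le_ceil K).trans (by exact_mod_cast hKk))
  have hlam_sum : ∑ j, lam (k j) = -(β * (oddRpow (2 * m) (k 0) + oddRpow (2 * m) (k 1) +
      oddRpow (2 * m) (k 2)) - α * (oddRpow (2 * r) (k 0) + oddRpow (2 * r) (k 1) +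
      oddRpow (2 * r) (k 2))) := by
    simp only [Fin.sum_univ_three, hlam, oddRpow]
    linear_combination (-2 * μ) * hk_sum
  have hmodulation := abs_sum_lam_le_card_mul lam hδ.le k τ hτ j₀
    (le_antisymm (le_min (hmin 0) (le_min (hmin 1) (hmin 2)))
      (min_le_of_fin_three (fun j => jbr (k j)) j₀))
    (le_max_of_fin_three fun j => jbr (k j)) hsmall
  rw [hlam_sum, abs_neg, Fintype.card_fin] at hmodulation
  exact mul_rpow_mul_rpow_one_sub_le (by linarith) hC.le ((jbr_pos _).le.trans (le_max_left _ _))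
    (lt_min (jbr_pos _) (lt_min (jbr_pos _) (jbr_pos _)))
    (max_jbr_le_two_mul_max_abs (hk_abs 0) (hk_abs 1) (hk_abs 2))
    (min_jbr_le_two_mul_min_abs (hk_abs 0) (hk_abs 1) (hk_abs 2)) (hresonance.trans hmodulation)

/-- if the maximal modulation is attained at the index `j₀` of the minimal
frequency, and the other two modulations are `≤ M_{j₀} (N_min/N_max)^δ`, then
`M_{j₀} ≥ c N_max^{2m} N_min^{1-δ}`. -/
theorem modulation_max_at_min_frequency_case1
    (α β μ m r δ : ℝ) (hα : 0 < α) (hβ : 0 < β) (hr : 0 < r) (hrm : r < m) (hδ : 0 < δ)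
    (lam : ℤ → ℝ)
    (hlam : ∀ k : ℤ, lam k =
      -β * (k : ℝ) * |(k : ℝ)| ^ (2 * m) + α * (k : ℝ) * |(k : ℝ)| ^ (2 * r) - 2 * μ * (k : ℝ)) :
    ∃ c > 0, ∃ K : ℕ, ∀ (k : Fin 3 → ℤ) (τ : Fin 3 → ℝ),
      (∀ j, k j ≠ 0) → (∑ j, τ j) = 0 → (∑ j, k j) = 0 →
      (K : ℤ) ≤ max |k 0| (max |k 1| |k 2|) →
      ∀ j₀ : Fin 3,
        (∀ j, modw lam δ (k j) (τ j) ≤ modw lam δ (k j₀) (τ j₀)) →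
        (∀ j, jbr ((k j₀ : ℤ) : ℝ) ≤ jbr ((k j : ℤ) : ℝ)) →
        (∀ j, j ≠ j₀ → modw lam δ (k j) (τ j) ≤
          modw lam δ (k j₀) (τ j₀) *
            (min (jbr ((k 0 : ℤ) : ℝ)) (min (jbr ((k 1 : ℤ) : ℝ)) (jbr ((k 2 : ℤ) : ℝ))) /
              max (jbr ((k 0 : ℤ) : ℝ)) (max (jbr ((k 1 : ℤ) : ℝ)) (jbr ((k 2 : ℤ) : ℝ)))) ^ δ) →
        c * max (jbr ((k 0 : ℤ) : ℝ)) (max (jbr ((k 1 : ℤ) : ℝ)) (jbr ((k 2 : ℤ) : ℝ))) ^ (2 * m)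
            * min (jbr ((k 0 : ℤ) : ℝ)) (min (jbr ((k 1 : ℤ) : ℝ)) (jbr ((k 2 : ℤ) : ℝ))) ^ (1 - δ)
          ≤ modw lam δ (k j₀) (τ j₀) :=
  modulation_max_at_min_frequency_case1_general α β μ m r δ hβ hr hrm hδ lam hlam
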